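/- Fix s ∈ ℂ with Re(s) > 1. Then the limit as m → ∞ of 𝒞(2m,1;s) = Σ'_{(p₁,p₂)} cos^{2m}(θ_{p₁,p₂})/(p₁²+p₂²)^s exists and equals 2ζ(2s): only the lattice points with |cos θ_{p₁,p₂}| = 1, i.e. the points (p₁,0) with p₁ ≠ 0, contribute in the limit. -/

import Mathlib

/-- The angle `θ_{p₁,p₂} = arg(p₁ + i p₂)` of a lattice point. -/
noncomputable def latticeAngle (p : ℤ × ℤ) : ℝ :=
  Complex.arg ((p.1 : ℂ) + (p.2 : ℂ) * Complex.I)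

/-- The angular lattice sum `𝒞(n,m;s)`. -/
noncomputable def latC (n m : ℕ) (s : ℂ) : ℂ :=
  ∑' p : {p : ℤ × ℤ // p ≠ 0},
    ((Real.cos ((m : ℝ) * latticeAngle p.1) : ℂ)) ^ n /
      (((p.1.1 : ℂ)) ^ 2 + ((p.1.2 : ℂ)) ^ 2) ^ s

/-- The angular lattice sum `𝒮(n,m;s)`. -/
noncomputable def latS (n m : ℕ) (s : ℂ) : ℂ :=
  ∑' p : {p : ℤ × ℤ // p ≠ 0},
    ((Real.sin ((m : ℝ) * latticeAngle p.1) : ℂ)) ^ n /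
      (((p.1.1 : ℂ)) ^ 2 + ((p.1.2 : ℂ)) ^ 2) ^ s

/-!
`cos^{2m} θ_p` is bounded by `1` and tends to `1` on the real axis `p₂ = 0` and to `0` off it.
Since `(p₁² + p₂²)^{-Re s}` is summable for `Re s > 1`, dominated convergence turns the limit into
the sum over the real axis, `∑_{n ≠ 0} |n|^{-2s} = 2 ζ(2s)`.
-/

open Filter Complex Topology

lemma Complex.sin_arg_eq_zero_iff {z : ℂ} : Real.sin (arg z) = 0 ↔ z.im = 0 := by
  rcases eq_or_ne z 0 with rfl | hz
  · simp
  · rw [sin_arg, div_eq_zero_iff, norm_eq_zero]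
    simp [hz]

lemma Complex.tendsto_cos_arg_pow_two_mul (z : ℂ) :
    Tendsto (fun m : ℕ => Real.cos (arg z) ^ (2 * m)) atTop (𝓝 (if z.im = 0 then 1 else 0)) := by
  simp only [pow_mul, Real.cos_sq']
  split_ifs with h
  · simp [sin_arg_eq_zero_iff.mpr h]
  · have hsin : 0 < Real.sin (arg z) ^ 2 := by
      positivity [sin_arg_eq_zero_iff.not.mpr h]
    exact tendsto_pow_atTop_nhds_zero_of_lt_one
      (by nlinarith [Real.sin_sq_le_one (arg z)]) (by linarith)

lemma tendsto_cos_latticeAngle_pow_two_mul (p : ℤ × ℤ) :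
    Tendsto (fun m : ℕ => (Real.cos (latticeAngle p) : ℂ) ^ (2 * m)) atTop
      (𝓝 (if p.2 = 0 then 1 else 0)) := by
  have := (continuous_ofReal.tendsto _).comp (tendsto_cos_arg_pow_two_mul ((p.1 : ℂ) + p.2 * I))
  simpa [latticeAngle, Function.comp_def, apply_ite] using this

lemma summable_norm_rpow_neg_int_prod {k : ℝ} (hk : 2 < k) :
    Summable fun p : ℤ × ℤ => ‖p‖ ^ (-k) := by
  refine ((finTwoArrowEquiv ℤ).symm.summable_iff.mpr
    (EisensteinSeries.summable_one_div_norm_rpow hk)).congr fun p => ?_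
  simp [EisensteinSeries.norm_eq_max_natAbs, Prod.norm_def, Int.norm_eq_abs]

lemma norm_sq_le_sq_add_sq (p : ℤ × ℤ) : ‖p‖ ^ 2 ≤ (p.1 : ℝ) ^ 2 + (p.2 : ℝ) ^ 2 := by
  rw [Prod.norm_def, Int.norm_eq_abs, Int.norm_eq_abs]
  rcases max_cases |(p.1 : ℝ)| |(p.2 : ℝ)| with ⟨h, -⟩ | ⟨h, -⟩ <;>
    rw [h, sq_abs] <;> nlinarith

lemma summable_sq_add_sq_rpow_neg {σ : ℝ} (hσ : 1 < σ) :
    Summable fun p : {p : ℤ × ℤ // p ≠ 0} => ((p.1.1 : ℝ) ^ 2 + (p.1.2 : ℝ) ^ 2) ^ (-σ) := by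
  refine ((summable_norm_rpow_neg_int_prod (k := 2 * σ) (by linarith)).subtype _).of_nonneg_of_le
    (fun p => by positivity) fun p => ?_
  have hp : 0 < ‖p.1‖ := norm_pos_iff.mpr p.2
  calc ((p.1.1 : ℝ) ^ 2 + (p.1.2 : ℝ) ^ 2) ^ (-σ) ≤ (‖p.1‖ ^ 2) ^ (-σ) :=
        Real.rpow_le_rpow_of_nonpos (by positivity) (norm_sq_le_sq_add_sq p.1) (by linarith)
    _ = ‖p.1‖ ^ (-(2 * σ)) := by
        rw [← Real.rpow_natCast, ← Real.rpow_mul hp.le]; ring_nf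

lemma sq_add_sq_pos_of_ne_zero {p : ℤ × ℤ} (hp : p ≠ 0) :
    0 < (p.1 : ℝ) ^ 2 + (p.2 : ℝ) ^ 2 := by
  have : p.1 ≠ 0 ∨ p.2 ≠ 0 := by
    contrapose! hp; exact Prod.ext hp.1 hp.2
  rcases this with h | h <;> positivity

lemma norm_sq_add_sq_cpow {p : ℤ × ℤ} (hp : p ≠ 0) (s : ℂ) :
    ‖((p.1 : ℂ) ^ 2 + (p.2 : ℂ) ^ 2) ^ s‖ = ((p.1 : ℝ) ^ 2 + (p.2 : ℝ) ^ 2) ^ s.re := by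
  have : (p.1 : ℂ) ^ 2 + (p.2 : ℂ) ^ 2 = (((p.1 : ℝ) ^ 2 + (p.2 : ℝ) ^ 2 : ℝ) : ℂ) := by
    push_cast; rfl
  rw [this, norm_cpow_eq_rpow_re_of_pos (sq_add_sq_pos_of_ne_zero hp)]

lemma norm_cos_pow_div_sq_add_sq_cpow_le {p : ℤ × ℤ} (hp : p ≠ 0) (x : ℝ) (n : ℕ) (s : ℂ) :
    ‖(Real.cos x : ℂ) ^ n / ((p.1 : ℂ) ^ 2 + (p.2 : ℂ) ^ 2) ^ s‖
      ≤ ((p.1 : ℝ) ^ 2 + (p.2 : ℝ) ^ 2) ^ (-s.re) := by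
  rw [norm_div, norm_pow, norm_real, norm_sq_add_sq_cpow hp, Real.rpow_neg (by positivity),
    ← one_div]
  gcongr
  exact pow_le_one₀ (norm_nonneg _) (Real.abs_cos_le_one x)

lemma Complex.ofReal_sq_cpow (x : ℝ) (s : ℂ) : ((x : ℂ) ^ 2) ^ s = ((|x| : ℝ) : ℂ) ^ (2 * s) := by
  have := cpow_mul_ofReal_nonneg (abs_nonneg x) 2 s
  push_cast at this
  rw [this, Real.rpow_two, sq_abs]; push_cast; rfl

lemma tsum_ite_snd_eq_zero_div_cpow_eq_two_mul_riemannZeta {s : ℂ} (hs : 1 / 2 < s.re) :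
    ∑' p : {p : ℤ × ℤ // p ≠ 0},
      (if p.1.2 = 0 then 1 else 0) / ((p.1.1 : ℂ) ^ 2 + (p.1.2 : ℂ) ^ 2) ^ s
      = 2 * riemannZeta (2 * s) := by
  have h2s : 1 < (2 * s).re := by simp; linarith
  have hζ : HasSum (fun n : ℤ => 1 / ((|(n : ℝ)| : ℝ) : ℂ) ^ (2 * s)) (2 * riemannZeta (2 * s)) := by
    simpa [mul_div_cancel₀, HurwitzZeta.hurwitzZetaEven_zero] using
      (HurwitzZeta.hasSum_int_hurwitzZetaEven 0 h2s).mul_left 2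
  let axis : {n : ℤ // n ≠ 0} → {p : ℤ × ℤ // p ≠ 0} := fun n => ⟨(n, 0), by simpa using n.2⟩
  have haxis : Function.Injective axis := fun m n h => Subtype.ext (by simpa [axis] using h)
  have hsupp : Function.support (fun p : {p : ℤ × ℤ // p ≠ 0} =>
      (if p.1.2 = 0 then 1 else 0) / ((p.1.1 : ℂ) ^ 2 + (p.1.2 : ℂ) ^ 2) ^ s) ⊆ Set.range axis := by
    rintro ⟨⟨a, b⟩, hp⟩ h
    obtain rfl : b = 0 := by by_contra hb; simp [hb] at h
    exact ⟨⟨a, by simpa using hp⟩, rfl⟩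
  calc _ = ∑' n : {n : ℤ // n ≠ 0}, 1 / ((|(n : ℝ)| : ℝ) : ℂ) ^ (2 * s) := by
        rw [← haxis.tsum_eq hsupp]
        refine tsum_congr fun n => ?_
        simp [axis, ← ofReal_sq_cpow (n : ℝ)]
    _ = ∑' n : ℤ, 1 / ((|(n : ℝ)| : ℝ) : ℂ) ^ (2 * s) := by
        refine tsum_subtype_eq_of_support_subset
          (f := fun n : ℤ => 1 / ((|(n : ℝ)| : ℝ) : ℂ) ^ (2 * s)) (s := {n : ℤ | n ≠ 0}) ?_
        rintro n hn rfl
        simp [zero_cpow (ne_zero_of_one_lt_re h2s)] at hn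
    _ = _ := hζ.tsum_eq

/-- For fixed `s` with `Re s > 1`, `𝒞(2m,1;s) → 2 ζ(2s)` as `m → ∞`. -/
theorem latC_tendsto_two_zeta (s : ℂ) (hs : 1 < s.re) :
    Filter.Tendsto (fun m : ℕ => latC (2 * m) 1 s) Filter.atTop
      (nhds (2 * riemannZeta (2 * s))) := by
  rw [← tsum_ite_snd_eq_zero_div_cpow_eq_two_mul_riemannZeta (by linarith)]
  simp only [latC, Nat.cast_one, one_mul]
  exact tendsto_tsum_of_dominated_convergence (summable_sq_add_sq_rpow_neg hs)
    (fun p => (tendsto_cos_latticeAngle_pow_two_mul p.1).div_const _)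
    (.of_forall fun m p => norm_cos_pow_div_sq_add_sq_cpow_le p.2 _ _ _)
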